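/- arXiv:2408.02298 — 2 statements merged into one kernel-verified Lean document; each statement's English description precedes it below -/
import Mathlib

section
/- For any vectors e1, e2 ∈ ℝ^d, any k ∈ {1,…,d}, and any ε > 0, one has 1 − SignAgree(e1, e2; k) ≤ ε^{−1} · ℓ_Sgn(e2; e1, k). (Lemma 3: the sign-agreement surrogate loss upper-bounds the sign disagreement.) -/
open Finset

/-- `rnk x i` is the rank (1-indexed) of `|x i|` among `|x 1|,…,|x d|` in descending
order, ties broken by index: it is the unique bijection `[d] → [d]` with
`rnk x i < rnk x j` iff `|x i| > |x j|`, or `|x i| = |x j|` and `i < j`. -/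
noncomputable def rnk {d : ℕ} (x : Fin d → ℝ) (i : Fin d) : ℕ :=
  (Finset.univ.filter (fun j => |x i| < |x j| ∨ (|x j| = |x i| ∧ j ≤ i))).card

/-- `TopFeatures(x;k)`: indices whose rank is at most `k`. -/
noncomputable def topFeat {d : ℕ} (x : Fin d → ℝ) (k : ℕ) : Finset (Fin d) :=
  Finset.univ.filter (fun i => rnk x i ≤ k)

/-- `sign(t) = 1` if `t ≥ 0`, else `-1`. -/
noncomputable def sgn (t : ℝ) : ℝ := if 0 ≤ t then 1 else -1

/-- Top-`k` feature agreement. -/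
noncomputable def featAgree {d : ℕ} (e1 e2 : Fin d → ℝ) (k : ℕ) : ℝ :=
  ((topFeat e1 k ∩ topFeat e2 k).card : ℝ) / k

/-- Top-`k` rank agreement. -/
noncomputable def rankAgree {d : ℕ} (e1 e2 : Fin d → ℝ) (k : ℕ) : ℝ :=
  (((topFeat e1 k ∩ topFeat e2 k).filter (fun i => rnk e1 i = rnk e2 i)).card : ℝ) / k

/-- Top-`k` sign agreement. -/
noncomputable def signAgree {d : ℕ} (e1 e2 : Fin d → ℝ) (k : ℕ) : ℝ :=
  (((topFeat e1 k ∩ topFeat e2 k).filter (fun i => sgn (e1 i) = sgn (e2 i))).card : ℝ) / k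

/-- Top-`k` signed-rank agreement. -/
noncomputable def signedRankAgree {d : ℕ} (e1 e2 : Fin d → ℝ) (k : ℕ) : ℝ :=
  (((topFeat e1 k ∩ topFeat e2 k).filter
      (fun i => sgn (e1 i) = sgn (e2 i) ∧ rnk e1 i = rnk e2 i)).card : ℝ) / k

/-- `ψ_feat(e2)`: max of `|e2 i|` over `i ∉ TopFeatures(e1;k)` when `k < d`, else `-ε`. -/
noncomputable def psiFeat {d : ℕ} (e1 e2 : Fin d → ℝ) (k : ℕ) (ε : ℝ) : ℝ :=
  if k < d then sSup ((fun i => |e2 i|) '' {i : Fin d | i ∉ topFeat e1 k}) else -ε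

/-- Feature-agreement surrogate loss `ℓ_Ftr(e2; e1, k)`. -/
noncomputable def lossFtr {d : ℕ} (e2 e1 : Fin d → ℝ) (k : ℕ) (ε : ℝ) : ℝ :=
  (∑ i ∈ topFeat e1 k, max 0 (psiFeat e1 e2 k ε - |e2 i| + ε)) / k

/-- `sortD a j` is the `j`-th largest entry of `a` (for `1 ≤ j ≤ d`). -/
noncomputable def sortD {d : ℕ} (a : Fin d → ℝ) (j : ℕ) : ℝ :=
  if h : d - j < d then (a ∘ Tuple.sort a) ⟨d - j, h⟩ else 0

/-- Rank-agreement surrogate loss `ℓ_Rnk(e2; e1, k)`: the sum over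
`I = {(j,i) : j ∈ [k], rank(e1,i) = j}` is realized as the sum over
`i ∈ TopFeatures(e1;k)` with `j = rnk e1 i`. -/
noncomputable def lossRnk {d : ℕ} (e2 e1 : Fin d → ℝ) (k : ℕ) (ε : ℝ) : ℝ :=
  (∑ i ∈ topFeat e1 k,
    max 0 (sortD (Function.update (fun t => |e2 t|) i (-ε)) (rnk e1 i) - |e2 i| + ε)) / k

/-- `ψ_sign(e2)`: max of `|e2 i|` over `i ∉ TopFeatures(e1;k)` when `k < d`, else `0`. -/
noncomputable def psiSign {d : ℕ} (e1 e2 : Fin d → ℝ) (k : ℕ) : ℝ :=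
  if k < d then sSup ((fun i => |e2 i|) '' {i : Fin d | i ∉ topFeat e1 k}) else 0

/-- Sign-agreement surrogate loss `ℓ_Sgn(e2; e1, k)`. -/
noncomputable def lossSgn {d : ℕ} (e2 e1 : Fin d → ℝ) (k : ℕ) (ε : ℝ) : ℝ :=
  (∑ i ∈ topFeat e1 k, max 0 (psiSign e1 e2 k - sgn (e1 i) * e2 i + ε)) / k

/-- Signed-rank-agreement surrogate loss `ℓ_SgnRnk(e2; e1, k)`. -/
noncomputable def lossSgnRnk {d : ℕ} (e2 e1 : Fin d → ℝ) (k : ℕ) (ε : ℝ) : ℝ :=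
  (∑ i ∈ topFeat e1 k,
    max 0 (sortD (Function.update (fun t => |e2 t|) i 0) (rnk e1 i) - sgn (e1 i) * e2 i + ε)) / k


section Aux

lemma rnk_pos {d : ℕ} (x : Fin d → ℝ) (i : Fin d) : 1 ≤ rnk x i := by
  apply Finset.card_pos.mpr
  exact ⟨i, by simp [rnk]⟩

lemma rnk_le {d : ℕ} (x : Fin d → ℝ) (i : Fin d) : rnk x i ≤ d := by
  have := Finset.card_filter_le (Finset.univ : Finset (Fin d))
    (fun j => |x i| < |x j| ∨ (|x j| = |x i| ∧ j ≤ i))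
  simpa [rnk] using this

lemma rnk_lt_rnk {d : ℕ} (x : Fin d → ℝ) {i j : Fin d}
    (h : |x i| < |x j| ∨ (|x j| = |x i| ∧ j < i)) : rnk x j < rnk x i := by
  apply Finset.card_lt_card
  rw [Finset.ssubset_iff_of_subset]
  · refine ⟨i, by simp [rnk], ?_⟩
    simp only [rnk, Finset.mem_filter, Finset.mem_univ, true_and]
    rcases h with h | ⟨h1, h2⟩
    · rintro (h' | ⟨h', _⟩) <;> linarith
    · rintro (h' | ⟨_, h'⟩)
      · linarith
      · exact absurd h' (not_le.mpr h2)
  · intro t ht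
    simp only [rnk, Finset.mem_filter, Finset.mem_univ, true_and] at ht ⊢
    rcases h with h | ⟨h1, h2⟩
    · rcases ht with h' | ⟨h', _⟩
      · left; linarith
      · left; linarith
    · rcases ht with h' | ⟨h', h''⟩
      · left; linarith
      · right; exact ⟨by linarith, h''.trans h2.le⟩

lemma rnk_injective {d : ℕ} (x : Fin d → ℝ) : Function.Injective (rnk x) := by
  intro i j hij
  by_contra hne
  rcases lt_trichotomy (|x i|) (|x j|) with h | h | h
  · exact absurd hij (rnk_lt_rnk x (Or.inl h)).ne'
  · rcases lt_trichotomy i j with h' | h' | h'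
    · exact absurd hij (rnk_lt_rnk x (Or.inr ⟨h, h'⟩)).ne
    · exact hne h'
    · exact absurd hij (rnk_lt_rnk x (Or.inr ⟨h.symm, h'⟩)).ne'
  · exact absurd hij (rnk_lt_rnk x (Or.inl h)).ne

lemma card_topFeat {d k : ℕ} (x : Fin d → ℝ) (hkd : k ≤ d) : (topFeat x k).card = k := by
  have hinj := rnk_injective x
  have himg : Finset.image (rnk x) Finset.univ = Finset.Icc 1 d := by
    apply Finset.eq_of_subset_of_card_le
    · intro n hn
      simp only [Finset.mem_image, Finset.mem_univ, true_and] at hn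
      obtain ⟨i, rfl⟩ := hn
      exact Finset.mem_Icc.mpr ⟨rnk_pos x i, rnk_le x i⟩
    · rw [Finset.card_image_of_injective _ hinj]
      simp
  have h2 : Finset.image (rnk x) (topFeat x k) = (Finset.Icc 1 d).filter (fun n => n ≤ k) := by
    rw [← himg]
    simp only [topFeat]
    exact (Finset.filter_image (p := fun n => n ≤ k)).symm
  have h3 : (Finset.Icc 1 d).filter (fun n => n ≤ k) = Finset.Icc 1 k := by
    ext n
    simp only [Finset.mem_filter, Finset.mem_Icc]
    omega
  have h4 := congrArg Finset.card h2
  rw [Finset.card_image_of_injective _ hinj, h3, Nat.card_Icc] at h4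
  omega

lemma exists_outside {d k : ℕ} (e1 e2 : Fin d → ℝ) (hkd : k ≤ d) {i : Fin d}
    (hi : k < rnk e2 i) : ∃ j, j ∉ topFeat e1 k ∧ |e2 i| ≤ |e2 j| := by
  by_contra h
  push_neg at h
  have hsub : (Finset.univ.filter
      (fun j => |e2 i| < |e2 j| ∨ (|e2 j| = |e2 i| ∧ j ≤ i))) ⊆ topFeat e1 k := by
    intro j hj
    simp only [Finset.mem_filter, Finset.mem_univ, true_and] at hj
    by_contra hj'
    have := h j hj'
    rcases hj with h1 | ⟨h1, _⟩ <;> linarith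
  have hc := Finset.card_le_card hsub
  rw [card_topFeat e1 hkd] at hc
  have : rnk e2 i ≤ k := hc
  omega

lemma psiSign_ge {d k : ℕ} (e1 e2 : Fin d → ℝ) {j : Fin d}
    (hj : j ∉ topFeat e1 k) (hkd : k ≤ d) : |e2 j| ≤ psiSign e1 e2 k := by
  have hkd' : k < d := by
    rcases lt_or_eq_of_le hkd with h | h
    · exact h
    · exfalso
      apply hj
      simp only [topFeat, Finset.mem_filter, Finset.mem_univ, true_and]
      have := rnk_le e1 j
      omega
  rw [psiSign, if_pos hkd']
  exact le_csSup ((Set.toFinite _).bddAbove) ⟨j, hj, rfl⟩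

lemma psiSign_nonneg {d k : ℕ} (e1 e2 : Fin d → ℝ) (hkd : k ≤ d) : 0 ≤ psiSign e1 e2 k := by
  rw [psiSign]
  split_ifs with h
  · obtain ⟨j, hj⟩ : ∃ j, j ∉ topFeat e1 k := by
      by_contra hc
      push_neg at hc
      have huniv : topFeat e1 k = Finset.univ := Finset.eq_univ_iff_forall.mpr hc
      have := card_topFeat e1 hkd
      rw [huniv, Finset.card_univ, Fintype.card_fin] at this
      omega
    calc (0:ℝ) ≤ |e2 j| := abs_nonneg _
      _ ≤ sSup ((fun i => |e2 i|) '' {i : Fin d | i ∉ topFeat e1 k}) :=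
        le_csSup ((Set.toFinite _).bddAbove) ⟨j, hj, rfl⟩
  · exact le_refl 0

lemma sgn_mul_le (t s : ℝ) : sgn t * s ≤ |s| := by
  rw [sgn]
  split_ifs
  · rw [one_mul]; exact le_abs_self s
  · rw [neg_one_mul]; exact neg_le_abs s

end Aux

/-- **Lemma 3.** For any `e1, e2 ∈ ℝ^d`, `k ∈ {1,…,d}`, and `ε > 0`,
`1 − SignAgree(e1,e2;k) ≤ ε⁻¹ · ℓ_Sgn(e2; e1, k)`. -/
theorem signDisagreement_le_surrogate {d : ℕ} (e1 e2 : Fin d → ℝ) (k : ℕ)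
    (hk : 1 ≤ k) (hkd : k ≤ d) (ε : ℝ) (hε : 0 < ε) :
    1 - signAgree e1 e2 k ≤ ε⁻¹ * lossSgn e2 e1 k ε := by
  set T := topFeat e1 k with hT
  set A := (T ∩ topFeat e2 k).filter (fun i => sgn (e1 i) = sgn (e2 i)) with hA
  have hTcard : T.card = k := card_topFeat e1 hkd
  have hAT : A ⊆ T := fun i hi => (Finset.mem_inter.mp (Finset.mem_filter.mp hi).1).1
  have key : ∀ i ∈ T \ A, ε ≤ max 0 (psiSign e1 e2 k - sgn (e1 i) * e2 i + ε) := by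
    intro i hi
    rw [Finset.mem_sdiff] at hi
    obtain ⟨hiT, hiA⟩ := hi
    have hbound : sgn (e1 i) * e2 i ≤ psiSign e1 e2 k := by
      by_cases hmem : i ∈ topFeat e2 k
      · have hsgn : sgn (e1 i) ≠ sgn (e2 i) := by
          intro h
          exact hiA (Finset.mem_filter.mpr ⟨Finset.mem_inter.mpr ⟨hiT, hmem⟩, h⟩)
        have hle0 : sgn (e1 i) * e2 i ≤ 0 := by
          unfold sgn at hsgn ⊢
          split_ifs at hsgn ⊢ with h1 h2 h2
          · exact absurd rfl hsgn
          · push_neg at h2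
            nlinarith
          · push_neg at h1
            nlinarith
          · exact absurd rfl hsgn
        linarith [psiSign_nonneg e1 e2 hkd]
      · have hrk : k < rnk e2 i := by
          by_contra hc
          push_neg at hc
          exact hmem (Finset.mem_filter.mpr ⟨Finset.mem_univ _, hc⟩)
        obtain ⟨j, hj, hle⟩ := exists_outside e1 e2 hkd hrk
        calc sgn (e1 i) * e2 i ≤ |e2 i| := sgn_mul_le _ _
          _ ≤ |e2 j| := hle
          _ ≤ psiSign e1 e2 k := psiSign_ge e1 e2 hj hkd
    exact le_max_of_le_right (by linarith)
  have hsum : ε * (((T \ A).card : ℕ) : ℝ) ≤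
      ∑ i ∈ T, max 0 (psiSign e1 e2 k - sgn (e1 i) * e2 i + ε) := by
    calc ε * (((T \ A).card : ℕ) : ℝ)
        = ∑ _i ∈ T \ A, ε := by rw [Finset.sum_const, nsmul_eq_mul]; ring
      _ ≤ ∑ i ∈ T \ A, max 0 (psiSign e1 e2 k - sgn (e1 i) * e2 i + ε) :=
          Finset.sum_le_sum key
      _ ≤ ∑ i ∈ T, max 0 (psiSign e1 e2 k - sgn (e1 i) * e2 i + ε) :=
          Finset.sum_le_sum_of_subset_of_nonneg Finset.sdiff_subset
            (fun i _ _ => le_max_left _ _)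
  have hAk : A.card ≤ k := hTcard ▸ Finset.card_le_card hAT
  have hcard : (((T \ A).card : ℕ) : ℝ) = (k : ℝ) - A.card := by
    rw [Finset.card_sdiff_of_subset hAT, hTcard, Nat.cast_sub hAk]
  rw [hcard] at hsum
  have hk0 : (0:ℝ) < k := by positivity
  rw [signAgree, lossSgn, ← hT, ← hA]
  calc 1 - ((A.card : ℕ) : ℝ) / k = ((k : ℝ) - A.card) / k := by
        rw [sub_div, div_self hk0.ne']
    _ = (ε * ((k : ℝ) - A.card)) / (ε * k) := by
        rw [mul_div_mul_left _ _ hε.ne']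
    _ ≤ (∑ i ∈ T, max 0 (psiSign e1 e2 k - sgn (e1 i) * e2 i + ε)) / (ε * k) :=
        (div_le_div_iff_of_pos_right (by positivity)).mpr hsum
    _ = ε⁻¹ * ((∑ i ∈ T, max 0 (psiSign e1 e2 k - sgn (e1 i) * e2 i + ε)) / k) := by
        ring
end

section
/- Let e1, e2 ∈ ℝ^d and k ∈ {1,…,d} with k < d. If an index i satisfies i ∈ TopFeatures(e1;k) and i ∉ TopFeatures(e2;k), then there exists an index j ∉ TopFeatures(e1;k) with |e2_j| ≥ |e2_i|; consequently |e2_i| ≤ max_{j ∉ TopFeatures(e1;k)} |e2_j| = ψ_feat(e2). -/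
open Finset

/-!
Ranks are read off the lexicographic key `(|x i|, i)` (index reversed), so `rnk x i` counts the
keys above that of `i`. A set of indices each with at most `k` keys above it has at most `k`
elements: all of them lie above the one with the smallest key. Hence `TopFeatures(e1;k)` has at
most `k` elements, while `i ∉ TopFeatures(e2;k)` gives more than `k` indices `j` with
`|e2 j| ≥ |e2 i|`; one of them lies outside `TopFeatures(e1;k)`.
-/

theorem card_filter_card_le_le {α β : Type*} [Fintype α] [LinearOrder β] (f : α → β) (k : ℕ) :
    #{i | #{j | f i ≤ f j} ≤ k} ≤ k := by
  set T : Finset α := {i | #{j | f i ≤ f j} ≤ k}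
  obtain hT | hT := T.eq_empty_or_nonempty
  · simp [hT]
  obtain ⟨m, hmT, hmin⟩ := T.exists_min_image f hT
  calc #T ≤ #{j | f m ≤ f j} := card_le_card fun t ht ↦ by simpa using hmin t ht
    _ ≤ k := (mem_filter.mp hmT).2

section rank

variable {d : ℕ}

def rankKey (x : Fin d → ℝ) (i : Fin d) : ℝ ×ₗ (Fin d)ᵒᵈ := toLex (|x i|, OrderDual.toDual i)

theorem rnk_eq_card_rankKey_le (x : Fin d → ℝ) (i : Fin d) :
    rnk x i = #{j | rankKey x i ≤ rankKey x j} := by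
  unfold rnk
  congr 1
  refine filter_congr fun j _ ↦ ?_
  simp only [rankKey, Prod.Lex.toLex_le_toLex, OrderDual.toDual_le_toDual, eq_comm]

theorem card_topFeat_le (x : Fin d → ℝ) (k : ℕ) : #(topFeat x k) ≤ k := by
  simpa only [topFeat, rnk_eq_card_rankKey_le] using card_filter_card_le_le (rankKey x) k

theorem exists_notMem_topFeat_abs_le {x y : Fin d → ℝ} {k : ℕ} {i : Fin d}
    (hi : i ∉ topFeat y k) : ∃ j ∉ topFeat x k, |y i| ≤ |y j| := by
  have hcard : k < #{j | rankKey y i ≤ rankKey y j} := by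
    simpa [topFeat, rnk_eq_card_rankKey_le] using hi
  obtain ⟨j, hj, hjx⟩ :=
    exists_mem_notMem_of_card_lt_card ((card_topFeat_le x k).trans_lt hcard)
  exact ⟨j, hjx, Prod.Lex.monotone_fst _ _ (mem_filter.mp hj).2⟩

theorem abs_le_psiFeat {x y : Fin d → ℝ} {k : ℕ} (hkd : k < d) {j : Fin d}
    (hj : j ∉ topFeat x k) (ε : ℝ) : |y j| ≤ psiFeat x y k ε := by
  rw [psiFeat, if_pos hkd]
  exact le_csSup (Set.toFinite _ |>.image _).bddAbove ⟨j, hj, rfl⟩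

end rank

theorem exists_outside_ge_and_le_psiFeat_general {d : ℕ} (e1 e2 : Fin d → ℝ) (k : ℕ)
    (hkd : k < d) (i : Fin d)
    (hi2 : i ∉ topFeat e2 k) :
    (∃ j : Fin d, j ∉ topFeat e1 k ∧ |e2 i| ≤ |e2 j|) ∧
      ∀ ε : ℝ, |e2 i| ≤ psiFeat e1 e2 k ε := by
  obtain ⟨j, hj, hle⟩ := exists_notMem_topFeat_abs_le (x := e1) hi2
  exact ⟨⟨j, hj, hle⟩, fun ε ↦ hle.trans (abs_le_psiFeat hkd hj ε)⟩

/-- If `i ∈ TopFeatures(e1;k)` but `i ∉ TopFeatures(e2;k)` (with `k < d`), then some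
`j ∉ TopFeatures(e1;k)` has `|e2_j| ≥ |e2_i|`; consequently `|e2_i| ≤ ψ_feat(e2)`
(which for `k < d` does not depend on `ε`). -/
theorem exists_outside_ge_and_le_psiFeat {d : ℕ} (e1 e2 : Fin d → ℝ) (k : ℕ)
    (hk : 1 ≤ k) (hkd : k < d) (i : Fin d)
    (hi1 : i ∈ topFeat e1 k) (hi2 : i ∉ topFeat e2 k) :
    (∃ j : Fin d, j ∉ topFeat e1 k ∧ |e2 i| ≤ |e2 j|) ∧
      ∀ ε : ℝ, |e2 i| ≤ psiFeat e1 e2 k ε :=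
  exists_outside_ge_and_le_psiFeat_general e1 e2 k hkd i hi2
end
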